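/- For every compact set N contained in the set S³ˣ³₊ of symmetric positive-definite 3×3 real matrices, there exist a finite set Λ ⊂ ℚ³ of nonzero vectors with rational coordinates and smooth functions a_k : N → (0,∞), one for each k ∈ Λ, such that ∑_{k∈Λ} a_k(R)² k⊗k = R for every R ∈ N. -/

import Mathlib

/-!
Near the identity every symmetric `3 × 3` matrix is a combination of the squares `k ⊗ k` of the
nine vectors `e_i`, `e_i ± e_j`, with affine coefficients that are positive there. A symmetric
positive-definite `A` is congruent to the identity, and by density already almost so through a
rational `P`; conjugating by `P⁻¹` then decomposes every symmetric `R` near `A` along the rational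
vectors `P⁻¹ k`. Nonnegative coefficient vectors representing a fixed matrix form a convex set,
so a smooth partition of unity glues finitely many such local decompositions over a closed
neighbourhood of `K`. Every coefficient becomes strictly positive by decomposing
`R - ε ∑_k k ⊗ k` instead of `R` and adding `ε` to all coefficients.
-/

open Set

noncomputable section

abbrev M3 : Type := Fin 3 → Fin 3 → ℝ

/-- symmetric positive definite -/
def IsSymPosDef (A : M3) : Prop :=
  (∀ i j, A i j = A j i) ∧
  ∀ v : Fin 3 → ℝ, v ≠ 0 → 0 < ∑ i, ∑ j, A i j * v i * v j

open Matrix Topology Manifold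
open scoped ContDiff

def conicCoeffs {ι E : Type*} [Fintype ι] [AddCommMonoid E] [Module ℝ E] (u : ι → E) (x : E) :
    Set (ι → ℝ) :=
  {c | 0 ≤ c ∧ ∑ i, c i • u i = x}

section ConicCoeffs

variable {ι κ E : Type*} [Fintype ι] [AddCommGroup E] [Module ℝ E]

theorem convex_conicCoeffs (u : ι → E) (x : E) : Convex ℝ (conicCoeffs u x) := by
  rintro c ⟨hc₀, hc⟩ d ⟨hd₀, hd⟩ a b ha hb hab
  refine ⟨by positivity, ?_⟩
  simp only [Pi.add_apply, Pi.smul_apply, smul_eq_mul]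
  simp only [add_smul, mul_smul, Finset.sum_add_distrib, ← Finset.smul_sum, hc, hd]
  rw [← add_smul, hab, one_smul]

theorem sum_fiberwise_mem_conicCoeffs [Fintype κ] [DecidableEq κ] {u : κ → E} {w : ι → κ}
    {c : ι → ℝ} {x : E} (hc : c ∈ conicCoeffs (u ∘ w) x) :
    (fun k => ∑ i with w i = k, c i) ∈ conicCoeffs u x := by
  refine ⟨fun k => Finset.sum_nonneg fun i _ => hc.1 i, ?_⟩
  rw [← hc.2, ← Finset.sum_fiberwise_of_maps_to (fun i _ => Finset.mem_univ (w i))]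
  simp only [Finset.sum_smul]
  exact Finset.sum_congr rfl fun k _ =>
    Finset.sum_congr rfl fun i hi => by simp [(Finset.mem_filter.1 hi).2]

end ConicCoeffs

section Gluing

variable {ι E : Type*} [Fintype ι] [NormedAddCommGroup E] [NormedSpace ℝ E]
  [FiniteDimensional ℝ E]

theorem exists_contDiff_forall_mem_conicCoeffs {u : ι → E} {s : Set E} (hs : IsClosed s)
    (hloc : ∀ x ∈ s, ∃ U ∈ 𝓝 x, ∃ g : E → ι → ℝ,
      ContDiffOn ℝ ∞ g U ∧ ∀ y ∈ U ∩ s, g y ∈ conicCoeffs u y) :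
    ∃ g : E → ι → ℝ, ContDiff ℝ ∞ g ∧ ∀ x ∈ s, g x ∈ conicCoeffs u x := by
  set t : E → Set (ι → ℝ) := fun x => {c | x ∈ s → c ∈ conicCoeffs u x}
  have ht : ∀ x, Convex ℝ (t x) := fun x => by
    by_cases hx : x ∈ s
    · simpa [t, hx] using convex_conicCoeffs u x
    · simpa [t, hx] using convex_univ
  have htloc : ∀ x, ∃ U ∈ 𝓝 x, ∃ g : E → ι → ℝ,
      ContMDiffOn 𝓘(ℝ, E) 𝓘(ℝ, ι → ℝ) (⊤ : ℕ∞) g U ∧ ∀ y ∈ U, g y ∈ t y := fun x => by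
    by_cases hx : x ∈ s
    · obtain ⟨U, hU, g, hg, hgU⟩ := hloc x hx
      exact ⟨U, hU, g, hg.contMDiffOn, fun y hy hys => hgU y ⟨hy, hys⟩⟩
    · exact ⟨sᶜ, hs.isOpen_compl.mem_nhds hx, 0, contMDiffOn_const,
        fun y hy hys => (hy hys).elim⟩
  obtain ⟨g, hg⟩ := exists_contMDiffMap_forall_mem_convex_of_local 𝓘(ℝ, E) ht htloc
  exact ⟨g, contMDiff_iff_contDiff.1 g.contMDiff, fun x hx => hg x hx⟩

theorem IsCompact.exists_contDiff_pos_coeffs {K : Set E} (hK : IsCompact K) {u : ι → E}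
    (Z : Submodule ℝ E) (hu : ∀ i, u i ∈ Z)
    (hloc : ∀ x ∈ K, ∃ U, IsOpen U ∧ x ∈ U ∧ ∃ g : E → ι → ℝ,
      ContDiffOn ℝ ∞ g U ∧ ∀ y ∈ U, y ∈ Z → g y ∈ conicCoeffs u y) :
    ∃ b : E → ι → ℝ, ContDiff ℝ ∞ b ∧
      ∀ x ∈ K, x ∈ Z → (∀ i, 0 < b x i) ∧ ∑ i, b x i • u i = x := by
  choose! U hUo hxU g hg hgU using hloc
  obtain ⟨δ, hδ, hKδ⟩ := hK.exists_cthickening_subset_open (isOpen_biUnion hUo)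
    fun x hx => mem_biUnion hx (hxU x hx)
  obtain ⟨c, hc, hcs⟩ := exists_contDiff_forall_mem_conicCoeffs (u := u)
    (Metric.isClosed_cthickening.inter Z.closed_of_finiteDimensional) fun y hy => by
      obtain ⟨x, hxK, hyx⟩ := mem_iUnion₂.1 (hKδ hy.1)
      exact ⟨U x, (hUo x hxK).mem_nhds hyx, g x, hg x hxK, fun z hz => hgU x hxK z hz.1 hz.2.2⟩
  set S := ∑ i, u i
  set ε := δ / (‖S‖ + 1)
  have hε : 0 < ε := by positivity
  refine ⟨fun x i => ε + c (x - ε • S) i, by fun_prop, fun x hxK hxZ => ?_⟩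
  have hshift : x - ε • S ∈ Metric.cthickening δ K ∩ Z := by
    refine ⟨Metric.mem_cthickening_of_dist_le _ x δ K hxK ?_,
      Z.sub_mem hxZ (Z.smul_mem ε (Z.sum_mem fun i _ => hu i))⟩
    rw [dist_eq_norm, sub_sub_cancel_left, norm_neg, norm_smul, Real.norm_of_nonneg hε.le]
    calc ε * ‖S‖ ≤ ε * (‖S‖ + 1) := by gcongr; linarith
      _ = δ := div_mul_cancel₀ _ (by positivity)
  obtain ⟨hc₀, hcS⟩ := hcs _ hshift
  refine ⟨fun i => add_pos_of_pos_of_nonneg hε (hc₀ i), ?_⟩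
  simp only [add_smul, Finset.sum_add_distrib, ← Finset.smul_sum, hcS]
  exact add_sub_cancel (ε • S) x

end Gluing

theorem exists_sq_coeffs_of_pos_coeffs {κ E : Type*} [NormedAddCommGroup E] [NormedSpace ℝ E]
    {Λ : Finset κ} {u : κ → E} {K : Set E} {b : E → Λ → ℝ} (hb : ContDiff ℝ ∞ b)
    (hbK : ∀ x ∈ K, (∀ k, 0 < b x k) ∧ ∑ k, b x k • u k = x) :
    ∃ a : κ → E → ℝ, (∀ k ∈ Λ, ∃ U, IsOpen U ∧ K ⊆ U ∧ ContDiffOn ℝ ∞ (a k) U) ∧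
      (∀ k ∈ Λ, ∀ x ∈ K, 0 < a k x) ∧ ∀ x ∈ K, ∑ k ∈ Λ, a k x ^ 2 • u k = x := by
  classical
  refine ⟨fun k x => if hk : k ∈ Λ then √(b x ⟨k, hk⟩) else 0, fun k hk => ?_,
    fun k hk x hx => ?_, fun x hx => ?_⟩
  · have hbk : ContDiff ℝ ∞ fun x => b x ⟨k, hk⟩ := contDiff_pi.1 hb _
    refine ⟨{x | 0 < b x ⟨k, hk⟩}, isOpen_lt continuous_const hbk.continuous,
      fun x hx => (hbK x hx).1 _, ?_⟩
    simp only [dif_pos hk]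
    exact hbk.contDiffOn.sqrt fun x hx => hx.ne'
  · simpa only [dif_pos hk] using Real.sqrt_pos.2 ((hbK x hx).1 _)
  · rw [← Finset.sum_coe_sort Λ]
    refine (Finset.sum_congr rfl fun k _ => ?_).trans (hbK x hx).2
    simp only [dif_pos k.2, Real.sq_sqrt ((hbK x hx).1 k).le]

theorem Matrix.vecMulVec_mulVec_self {n α : Type*} [Fintype n] [CommSemiring α]
    (Q : Matrix n n α) (v : n → α) :
    vecMulVec (Q *ᵥ v) (Q *ᵥ v) = Q * vecMulVec v v * Qᵀ := by
  rw [mul_vecMulVec, vecMulVec_mul, vecMul_transpose]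

theorem mem_conicCoeffs_congr {ι n : Type*} [Fintype ι] [Fintype n] {v : ι → n → ℝ}
    {c : ι → ℝ} {X : Matrix n n ℝ} (hc : c ∈ conicCoeffs (fun i => vecMulVec (v i) (v i)) X)
    (Q : Matrix n n ℝ) :
    c ∈ conicCoeffs (fun i => vecMulVec (Q *ᵥ v i) (Q *ᵥ v i)) (Q * X * Qᵀ) := by
  refine ⟨hc.1, ?_⟩
  simp only [vecMulVec_mulVec_self, ← hc.2, Finset.mul_sum, Finset.sum_mul, Matrix.mul_smul,
    Matrix.smul_mul]

open scoped MatrixOrder in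
theorem Matrix.PosDef.exists_mul_mul_transpose_eq_one {n : Type*} [Fintype n] [DecidableEq n]
    {A : Matrix n n ℝ} (hA : A.PosDef) : ∃ M : Matrix n n ℝ, M * A * Mᵀ = 1 := by
  set S := CFC.sqrt A
  have hSS : S * S = A := CFC.sqrt_mul_sqrt_self A hA.posSemidef.nonneg
  have hST : Sᵀ = S := by
    simpa using (CFC.sqrt_nonneg A).posSemidef.isHermitian.eq
  have hdet : IsUnit S.det :=
    (isUnit_iff_isUnit_det S).1 (isUnit_of_mul_isUnit_left (hSS ▸ hA.isUnit))
  refine ⟨S⁻¹, ?_⟩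
  rw [transpose_nonsing_inv, hST, ← hSS, ← mul_assoc, nonsing_inv_mul _ hdet, one_mul,
    mul_nonsing_inv _ hdet]

theorem Matrix.exists_map_ratCast_mem_of_isOpen {m n : Type*} [Fintype m] [Fintype n]
    {O : Set (Matrix m n ℝ)} (hO : IsOpen O) (hne : O.Nonempty) :
    ∃ P : Matrix m n ℚ, P.map (↑) ∈ O :=
  (DenseRange.piMap fun _ => DenseRange.piMap fun _ => Rat.denseRange_cast).exists_mem_open hO hne

theorem Matrix.map_ratCast_mulVec {n : Type*} [Fintype n] (Q : Matrix n n ℚ) (v : n → ℚ) :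
    Q.map (↑) *ᵥ (fun i => (v i : ℝ)) = fun i => ((Q *ᵥ v) i : ℝ) :=
  funext fun i => (RingHom.map_mulVec (Rat.castHom ℝ) Q v i).symm

def mikadoVec : Fin 9 → Fin 3 → ℚ :=
  ![![1, 0, 0], ![0, 1, 0], ![0, 0, 1], ![1, 1, 0], ![1, 0, 1], ![0, 1, 1],
    ![1, -1, 0], ![1, 0, -1], ![0, 1, -1]]

/-- The weights `1/8 ± X i j / 2` of `e_i ± e_j` produce the entry `X i j` and add `1/4` to the
diagonal entries `i` and `j`; the three pairs together add `1/2` to every diagonal entry. -/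
def mikadoCoeff (X : Matrix (Fin 3) (Fin 3) ℝ) : Fin 9 → ℝ
  | 0 => X 0 0 - 1/2 | 1 => X 1 1 - 1/2 | 2 => X 2 2 - 1/2
  | 3 => 1/8 + X 0 1 / 2 | 4 => 1/8 + X 0 2 / 2 | 5 => 1/8 + X 1 2 / 2
  | 6 => 1/8 - X 0 1 / 2 | 7 => 1/8 - X 0 2 / 2 | 8 => 1/8 - X 1 2 / 2

def nearOne : Set (Matrix (Fin 3) (Fin 3) ℝ) :=
  {X | ∀ i j, |X i j - (1 : Matrix (Fin 3) (Fin 3) ℝ) i j| < 1/4}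

theorem isOpen_nearOne : IsOpen nearOne := by
  simp only [nearOne, ofPred_forall]
  exact isOpen_iInter_of_finite fun i => isOpen_iInter_of_finite fun j =>
    isOpen_lt (by fun_prop) continuous_const

theorem one_mem_nearOne : (1 : Matrix (Fin 3) (Fin 3) ℝ) ∈ nearOne := fun i j => by simp

theorem mikadoVec_ne_zero (m : Fin 9) : mikadoVec m ≠ 0 := by
  fin_cases m <;> simp [mikadoVec, funext_iff, Fin.forall_fin_succ]

theorem mikadoCoeff_mem_conicCoeffs {X : Matrix (Fin 3) (Fin 3) ℝ} (hX : X ∈ nearOne)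
    (hXs : X.IsSymm) :
    mikadoCoeff X ∈
      conicCoeffs (fun m => vecMulVec (fun i => (mikadoVec m i : ℝ)) (fun i => (mikadoVec m i : ℝ)))
        X := by
  refine ⟨fun m => ?_, ?_⟩
  · have := fun i j => abs_lt.1 (hX i j)
    simp only [one_apply] at this
    have h00 := this 0 0; have h11 := this 1 1; have h22 := this 2 2
    have h01 := this 0 1; have h02 := this 0 2; have h12 := this 1 2
    fin_cases m <;> simp_all [mikadoCoeff] <;> linarith
  · have h10 := hXs.apply 0 1
    have h20 := hXs.apply 0 2
    have h21 := hXs.apply 1 2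
    ext i j
    simp only [Fin.sum_univ_succ, Fin.sum_univ_zero, Matrix.sum_apply]
    fin_cases i <;> fin_cases j <;> simp [mikadoCoeff, mikadoVec, vecMulVec_apply] <;> linarith

theorem contDiff_mikadoCoeff_conj (M : Matrix (Fin 3) (Fin 3) ℝ) :
    ContDiff ℝ ∞ fun R : M3 => mikadoCoeff (M * of R * Mᵀ) := by
  have hentry : ∀ i j, ContDiff ℝ ∞ fun R : M3 => (M * of R * Mᵀ) i j := fun i j => by
    simp only [mul_apply, of_apply, transpose_apply]
    fun_prop
  refine contDiff_pi.2 fun m => ?_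
  fin_cases m <;> simp only [mikadoCoeff]
  all_goals first
    | exact (hentry _ _).sub contDiff_const
    | exact contDiff_const.add ((hentry _ _).div_const _)
    | exact contDiff_const.sub ((hentry _ _).div_const _)

def ratOuter (k : Fin 3 → ℚ) : M3 := fun i j => (k i : ℝ) * (k j : ℝ)

def symmetricSubmodule : Submodule ℝ M3 where
  carrier := {R | ∀ i j, R i j = R j i}
  add_mem' ha hb i j := by simp [ha i j, hb i j]
  zero_mem' _ _ := rfl
  smul_mem' c _ h i j := by simp [h i j]

theorem ratOuter_mem_symmetricSubmodule (k : Fin 3 → ℚ) : ratOuter k ∈ symmetricSubmodule :=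
  fun _ _ => mul_comm _ _

theorem IsSymPosDef.mem_symmetricSubmodule {A : M3} (hA : IsSymPosDef A) :
    A ∈ symmetricSubmodule :=
  hA.1

theorem IsSymPosDef.posDef {A : M3} (hA : IsSymPosDef A) : (of A).PosDef := by
  rw [posDef_iff_dotProduct_mulVec]
  refine ⟨IsHermitian.ext fun i j => (hA.1 i j).symm, fun v hv => (hA.2 v hv).trans_eq ?_⟩
  simp only [dotProduct, mulVec, of_apply, star_trivial, Finset.mul_sum]
  exact Finset.sum_congr rfl fun i _ => Finset.sum_congr rfl fun j _ => by ring

theorem IsSymPosDef.exists_rat_conj_mem_nearOne {A : M3} (hA : IsSymPosDef A) :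
    ∃ P Q : Matrix (Fin 3) (Fin 3) ℚ, Q * P = 1 ∧
      P.map (↑) * of A * (P.map (↑))ᵀ ∈ nearOne := by
  obtain ⟨M, hM⟩ := hA.posDef.exists_mul_mul_transpose_eq_one
  have hO : IsOpen {M : Matrix (Fin 3) (Fin 3) ℝ | M.det ≠ 0 ∧ M * of A * Mᵀ ∈ nearOne} :=
    (isOpen_ne_fun (by fun_prop) continuous_const).inter
      (isOpen_nearOne.preimage (by fun_prop))
  have hMdet : M.det ≠ 0 := fun h => by simpa [h] using congrArg det hM
  obtain ⟨P, hPdet, hP⟩ := exists_map_ratCast_mem_of_isOpen hO ⟨M, hMdet, hM ▸ one_mem_nearOne⟩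
  refine ⟨P, P⁻¹, nonsing_inv_mul P ?_, hP⟩
  have hcast : (P.map Rat.cast).det = (P.det : ℝ) := (RingHom.map_det (Rat.castHom ℝ) P).symm
  exact isUnit_iff_ne_zero.2 fun h => hPdet (by rw [hcast, h, Rat.cast_zero])

theorem mikadoCoeff_conj_mem_conicCoeffs {P Q : Matrix (Fin 3) (Fin 3) ℚ} (hQP : Q * P = 1)
    {R : M3} (hR : R ∈ symmetricSubmodule)
    (hX : P.map (↑) * of R * (P.map (↑))ᵀ ∈ nearOne) :
    mikadoCoeff (P.map (↑) * of R * (P.map (↑))ᵀ) ∈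
      conicCoeffs (fun m => ratOuter (Q *ᵥ mikadoVec m)) R := by
  have hRT : (of R)ᵀ = of R := Matrix.ext fun i j => hR j i
  have hsymm : (P.map (↑) * of R * (P.map (↑))ᵀ : Matrix (Fin 3) (Fin 3) ℝ).IsSymm := by
    simp only [IsSymm, transpose_mul, transpose_transpose, hRT, Matrix.mul_assoc]
  have hQPℝ : Q.map ((↑) : ℚ → ℝ) * P.map (↑) = 1 := by
    have h := congrArg (Rat.castHom ℝ).mapMatrix hQP
    rw [map_mul, map_one] at h
    exact h
  have := mem_conicCoeffs_congr (mikadoCoeff_mem_conicCoeffs hX hsymm) (Q.map (↑))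
  simp only [map_ratCast_mulVec] at this
  convert this using 1
  rw [← Matrix.mul_assoc, ← Matrix.mul_assoc, hQPℝ, Matrix.one_mul, Matrix.mul_assoc,
    ← transpose_mul, hQPℝ, transpose_one, Matrix.mul_one]
  rfl

theorem IsSymPosDef.exists_local_conicCoeffs {A : M3} (hA : IsSymPosDef A) :
    ∃ Λ₀ : Finset (Fin 3 → ℚ), (∀ k ∈ Λ₀, k ≠ 0) ∧ ∃ U : Set M3, IsOpen U ∧ A ∈ U ∧
      ∀ Λ : Finset (Fin 3 → ℚ), Λ₀ ⊆ Λ → ∃ g : M3 → Λ → ℝ, ContDiff ℝ ∞ g ∧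
        ∀ R ∈ U, R ∈ symmetricSubmodule → g R ∈ conicCoeffs (fun k : Λ => ratOuter k) R := by
  classical
  obtain ⟨P, Q, hQP, hA⟩ := hA.exists_rat_conj_mem_nearOne
  set Pℝ := P.map ((↑) : ℚ → ℝ)
  set w : Fin 9 → Fin 3 → ℚ := fun m => Q *ᵥ mikadoVec m
  refine ⟨Finset.univ.image w, ?_, {R | Pℝ * of R * Pℝᵀ ∈ nearOne},
    isOpen_nearOne.preimage (by fun_prop), hA, fun Λ hΛ => ?_⟩
  · simp only [Finset.mem_image]
    rintro _ ⟨m, -, rfl⟩ h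
    apply mikadoVec_ne_zero m
    rw [← one_mulVec (mikadoVec m), ← mul_eq_one_comm.1 hQP, ← mulVec_mulVec]
    exact h ▸ mulVec_zero P
  · have hw : ∀ m, w m ∈ Λ := fun m => hΛ (Finset.mem_image_of_mem w (Finset.mem_univ m))
    refine ⟨fun R k => ∑ m with (⟨w m, hw m⟩ : Λ) = k, mikadoCoeff (Pℝ * of R * Pℝᵀ) m,
      contDiff_pi.2 fun k => ContDiff.sum fun m _ => contDiff_pi.1 (contDiff_mikadoCoeff_conj Pℝ) m,
      fun R hRU hR => sum_fiberwise_mem_conicCoeffs (mikadoCoeff_conj_mem_conicCoeffs hQP hR hRU)⟩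

theorem mikado_lemma (K : Set M3) (hKcompact : IsCompact K)
    (hKpos : ∀ A ∈ K, IsSymPosDef A) :
    ∃ Λ : Finset (Fin 3 → ℚ), (∀ k ∈ Λ, k ≠ 0) ∧
      ∃ a : (Fin 3 → ℚ) → M3 → ℝ,
        (∀ k ∈ Λ, ∃ U : Set M3, IsOpen U ∧ K ⊆ U ∧ ContDiffOn ℝ (⊤ : ℕ∞) (a k) U) ∧
        (∀ k ∈ Λ, ∀ A ∈ K, 0 < a k A) ∧
        (∀ A ∈ K, ∀ i j, ∑ k ∈ Λ, (a k A) ^ 2 * (k i : ℝ) * (k j : ℝ) = A i j) := by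
  classical
  choose! Λ₀ hΛ₀ U hUo hAU hg using fun A (hA : A ∈ K) => (hKpos A hA).exists_local_conicCoeffs
  obtain ⟨t, htK, hKt⟩ :=
    hKcompact.elim_nhds_subcover U fun A hA => (hUo A hA).mem_nhds (hAU A hA)
  set Λ := t.biUnion Λ₀
  obtain ⟨b, hb, hbK⟩ := hKcompact.exists_contDiff_pos_coeffs symmetricSubmodule
    (u := fun k : Λ => ratOuter k) (fun k => ratOuter_mem_symmetricSubmodule k) fun x hx => by
      obtain ⟨A, hAt, hxA⟩ := mem_iUnion₂.1 (hKt hx)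
      obtain ⟨g, hg, hgU⟩ := hg A (htK A hAt) Λ (Finset.subset_biUnion_of_mem Λ₀ hAt)
      exact ⟨U A, hUo A (htK A hAt), hxA, g, hg.contDiffOn, hgU⟩
  obtain ⟨a, ha, ha₀, haK⟩ := exists_sq_coeffs_of_pos_coeffs hb fun A hA =>
    hbK A hA (hKpos A hA).mem_symmetricSubmodule
  refine ⟨Λ, fun k hk => ?_, a, ha, ha₀, fun A hA i j => ?_⟩
  · obtain ⟨A, hAt, hkA⟩ := Finset.mem_biUnion.1 hk
    exact hΛ₀ A (htK A hAt) k hkA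
  · simpa [Finset.sum_apply, ratOuter, mul_assoc] using congrFun (congrFun (haK A hA) i) j

end
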